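/- arXiv:2103.14108 — 2 statements merged into one kernel-verified Lean document; each statement's English description precedes it below -/
import Mathlib

section
/- Let P be a real n×n matrix that is symmetric (Pᵀ = P) and idempotent (P² = P). Suppose P admits a decomposition P = Σ_{i=1}^r σ_i u_i v_iᵀ where the σ_i are strictly positive real numbers, {u_1,…,u_r} is an orthonormal family in ℝ^n, and {v_1,…,v_r} is an orthonormal family in ℝ^n. Then σ_i = 1 and u_i = v_i for every i = 1,…,r. -/
open Matrix

lemma vecMulVec_mulVec' {n m : ℕ} (a : Fin n → ℝ) (b : Fin m → ℝ) (x : Fin m → ℝ) :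
    (vecMulVec a b).mulVec x = (b ⬝ᵥ x) • a := by
  ext i
  simp [mulVec, vecMulVec_apply, dotProduct, Finset.mul_sum, mul_comm, mul_left_comm]

lemma vecMulVec_transpose' {n m : ℕ} (a : Fin n → ℝ) (b : Fin m → ℝ) :
    (vecMulVec a b)ᵀ = vecMulVec b a := by
  ext i j; simp [vecMulVec_apply, mul_comm]

lemma sum_mulVec' {r n m : ℕ} (M : Fin r → Matrix (Fin n) (Fin m) ℝ) (x : Fin m → ℝ) :
    (∑ i, M i) *ᵥ x = ∑ i, M i *ᵥ x := by
  ext j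
  simp [mulVec, dotProduct, Finset.sum_apply, Finset.sum_mul, Matrix.sum_apply]
  rw [Finset.sum_comm]

/-- In an SVD-type decomposition `P = Σ σᵢ uᵢ vᵢᵀ` of a
symmetric idempotent matrix `P`, with `σᵢ > 0` and orthonormal families `u`
and `v`, all singular values equal `1` and the left and right singular
vectors coincide. -/
theorem svd_of_orthogonal_projector
    {n r : ℕ} (P : Matrix (Fin n) (Fin n) ℝ)
    (hsym : Pᵀ = P) (hidem : P * P = P)
    (σ : Fin r → ℝ) (hσ : ∀ i, 0 < σ i)
    (u v : Fin r → Fin n → ℝ)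
    (hu : ∀ i j, u i ⬝ᵥ u j = if i = j then (1 : ℝ) else 0)
    (hv : ∀ i j, v i ⬝ᵥ v j = if i = j then (1 : ℝ) else 0)
    (hP : P = ∑ i, σ i • vecMulVec (u i) (v i)) :
    ∀ i, σ i = 1 ∧ u i = v i := by
  have hPv : ∀ j, P.mulVec (v j) = σ j • u j := by
    intro j
    rw [hP]
    rw [sum_mulVec']
    have : ∀ i, ((σ i • vecMulVec (u i) (v i)).mulVec (v j))
        = (if i = j then (1:ℝ) else 0) • σ i • u i := by
      intro i
      rw [smul_mulVec, vecMulVec_mulVec', hv i j]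
      rw [smul_comm]
    simp only [this]
    simp [Finset.sum_ite_eq']
  have hPu : ∀ j, P.mulVec (u j) = σ j • v j := by
    intro j
    have hPT : Pᵀ = ∑ i, σ i • vecMulVec (v i) (u i) := by
      rw [hP, transpose_sum]
      congr 1; ext i
      rw [transpose_smul, vecMulVec_transpose']
    rw [← hsym, hPT, sum_mulVec']
    have : ∀ i, ((σ i • vecMulVec (v i) (u i)).mulVec (u j))
        = (if i = j then (1:ℝ) else 0) • σ i • v i := by
      intro i
      rw [smul_mulVec, vecMulVec_mulVec', hu i j]
      rw [smul_comm]
    simp only [this]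
    simp [Finset.sum_ite_eq']
  intro j
  have key : σ j • u j = (σ j * σ j) • v j := by
    have := congrArg (fun M => M.mulVec (v j)) hidem
    simp only [← mulVec_mulVec, hPv] at this
    rw [mulVec_smul, hPu] at this
    rw [← this, smul_smul]
  have hne : σ j ≠ 0 := (hσ j).ne'
  have huv : u j = σ j • v j := by
    have := congrArg (fun x => (σ j)⁻¹ • x) key
    simpa [smul_smul, hne, mul_assoc, inv_mul_cancel₀] using this
  have hσ1 : σ j = 1 := by
    have h1 : (1:ℝ) = σ j * σ j := by
      have := hu j j
      rw [huv] at this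
      simp only [if_pos rfl] at this
      rw [smul_dotProduct, dotProduct_smul, hv j j, if_pos rfl] at this
      simpa [smul_eq_mul] using this.symm
    nlinarith [hσ j]
  exact ⟨hσ1, by rw [huv, hσ1, one_smul]⟩
end

section
/- Let σ > 0 and θ ∈ (0, π) be real numbers, and set s = √(1 + σ² − 2σ cos θ), which is strictly positive. Let δφ be a real number satisfying sin δφ = (σ cos θ − 1)/s and cos δφ = σ sin θ / s (these are consistent, since the sum of their squares equals 1). Then σ cos(θ + δφ) = cos δφ; equivalently, whenever cos(θ + δφ) ≠ 0, σ = cos δφ / cos(θ + δφ). -/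
open Real

/-! The quantity `s` is the distance `|σ - e^{iθ}|`, positive because `sin θ ≠ 0`. Expanding
`cos (θ + δφ)` with the prescribed `sin δφ` and `cos δφ`, the two terms `σ cos θ sin θ` cancel and
`σ cos (θ + δφ) = σ sin θ / s = cos δφ` remains. -/

lemma one_add_sq_sub_two_mul_cos_eq (σ θ : ℝ) :
    1 + σ ^ 2 - 2 * σ * cos θ = (σ - cos θ) ^ 2 + sin θ ^ 2 := by
  linear_combination -sin_sq_add_cos_sq θ

lemma sqrt_one_add_sq_sub_two_mul_cos_pos {σ θ : ℝ} (hθ : sin θ ≠ 0) :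
    0 < √(1 + σ ^ 2 - 2 * σ * cos θ) := by
  rw [one_add_sq_sub_two_mul_cos_eq]
  positivity

lemma mul_cos_add_eq_cos_of_sin_of_cos {σ θ s δ : ℝ}
    (hsin : sin δ = (σ * cos θ - 1) / s) (hcos : cos δ = σ * sin θ / s) :
    σ * cos (θ + δ) = cos δ := by
  rw [cos_add, hsin, hcos]
  ring

theorem singular_value_angle_relation_general
    (σ θ s δφ : ℝ) (hθ : θ ∈ Set.Ioo 0 π)
    (hs : s = Real.sqrt (1 + σ ^ 2 - 2 * σ * Real.cos θ))
    (hsin : Real.sin δφ = (σ * Real.cos θ - 1) / s)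
    (hcos : Real.cos δφ = σ * Real.sin θ / s) :
    0 < s ∧ σ * Real.cos (θ + δφ) = Real.cos δφ ∧
      (Real.cos (θ + δφ) ≠ 0 → σ = Real.cos δφ / Real.cos (θ + δφ)) := by
  have hs_pos : 0 < s := hs ▸ sqrt_one_add_sq_sub_two_mul_cos_pos (sin_pos_of_mem_Ioo hθ).ne'
  have key : σ * cos (θ + δφ) = cos δφ := mul_cos_add_eq_cos_of_sin_of_cos hsin hcos
  exact ⟨hs_pos, key, fun h => eq_div_of_mul_eq h key⟩

/-- For `σ > 0`, `θ ∈ (0, π)`, `s = √(1 + σ² − 2σ cos θ)`,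
and `δφ` with `sin δφ = (σ cos θ − 1)/s` and `cos δφ = σ sin θ / s`, the
quantity `s` is strictly positive and `σ cos(θ + δφ) = cos δφ`; equivalently,
whenever `cos(θ + δφ) ≠ 0`, `σ = cos δφ / cos(θ + δφ)`. -/
theorem singular_value_angle_relation
    (σ θ s δφ : ℝ) (hσ : 0 < σ) (hθ : θ ∈ Set.Ioo 0 π)
    (hs : s = Real.sqrt (1 + σ ^ 2 - 2 * σ * Real.cos θ))
    (hsin : Real.sin δφ = (σ * Real.cos θ - 1) / s)
    (hcos : Real.cos δφ = σ * Real.sin θ / s) :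
    0 < s ∧ σ * Real.cos (θ + δφ) = Real.cos δφ ∧
      (Real.cos (θ + δφ) ≠ 0 → σ = Real.cos δφ / Real.cos (θ + δφ)) :=
  singular_value_angle_relation_general σ θ s δφ hθ hs hsin hcos
end
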